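/- arXiv:2510.26401 — 3 statements merged into one kernel-verified Lean document; each statement's English description precedes it below -/
import Mathlib

section
/- Let T be a positive natural number, let σ₁, …, σ_T be positive reals, and for each t let w_t : ℝᵀ → ℝ be a positive function that is differentiable in its t-th coordinate. Fix f ∈ ℝᵀ and define, for y ∈ ℝᵀ, the loss L(f, y) := ∑_{t=1}^{T} (w_t(y)²/σ_t⁴)·(f_t − y_t)² + 2·∑_{t=1}^{T} ∂/∂y_t [ w_t(y)²·(f_t − y_t)/σ_t² ]. Then there exists r : ℝᵀ → ℝ, independent of f, such that for all f and y: L(f, y) = ∑_{t=1}^{T} (w_t(y)²/σ_t⁴)·( f_t² − 2 f_t·( y_t − σ_t²·∂/∂y_t log(w_t(y)²) ) ) + r(y). (This shows the weighted Fisher-divergence loss of the MO-RCGP with diagonal weight matrix and diagonal noise covariance is quadratic in f, which yields conjugacy.) -/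
open Matrix

/-- The weighted Fisher-divergence loss of the MO-RCGP with diagonal weight matrix
and diagonal noise covariance is quadratic in `f`: there exists `r` independent of
`f` such that
`L(f,y) = ∑_t (w_t(y)²/σ_t⁴)(f_t² − 2 f_t (y_t − σ_t² ∂_t log w_t(y)²)) + r(y)`. -/
theorem mo_rcgp_loss_quadratic
    (T : ℕ) (hT : 0 < T) (σ : Fin T → ℝ) (hσ : ∀ t, 0 < σ t)
    (w : Fin T → (Fin T → ℝ) → ℝ) (hw : ∀ t y, 0 < w t y)
    (hdiff : ∀ (t : Fin T) (y : Fin T → ℝ),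
      DifferentiableAt ℝ (fun s => w t (Function.update y t s)) (y t)) :
    ∃ r : (Fin T → ℝ) → ℝ, ∀ f y : Fin T → ℝ,
      (∑ t, (w t y) ^ 2 / (σ t) ^ 4 * (f t - y t) ^ 2)
          + 2 * ∑ t, deriv (fun s => (w t (Function.update y t s)) ^ 2 * (f t - s) / (σ t) ^ 2) (y t)
        = (∑ t, (w t y) ^ 2 / (σ t) ^ 4 *
              ((f t) ^ 2 - 2 * f t *
                (y t - (σ t) ^ 2 *
                  deriv (fun s => Real.log ((w t (Function.update y t s)) ^ 2)) (y t))))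
            + r y := by
  refine ⟨fun y => ∑ t, ((w t y) ^ 2 * (y t) ^ 2 / (σ t) ^ 4
      - 4 * w t y * deriv (fun s => w t (Function.update y t s)) (y t) * y t / (σ t) ^ 2
      - 2 * (w t y) ^ 2 / (σ t) ^ 2), ?_⟩
  intro f y
  rw [Finset.mul_sum, ← Finset.sum_add_distrib, ← Finset.sum_add_distrib]
  refine Finset.sum_congr rfl fun t _ => ?_
  have hg : HasDerivAt (fun s => w t (Function.update y t s))
      (deriv (fun s => w t (Function.update y t s)) (y t)) (y t) := (hdiff t y).hasDerivAt
  set d := deriv (fun s => w t (Function.update y t s)) (y t) with hd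
  have hgy : w t (Function.update y t (y t)) = w t y := by rw [Function.update_eq_self]
  have hwne : w t (Function.update y t (y t)) ≠ 0 := (hw t _).ne'
  have hsub : HasDerivAt (fun s => f t - s) (-1) (y t) :=
    (hasDerivAt_id (y t)).const_sub (f t)
  have h1 : HasDerivAt (fun s => (w t (Function.update y t s)) ^ 2 * (f t - s) / (σ t) ^ 2)
      (((2 : ℕ) * (w t (Function.update y t (y t))) ^ 1 * d * (f t - y t)
        + (w t (Function.update y t (y t))) ^ 2 * (-1)) / (σ t) ^ 2) (y t) :=
    ((hg.pow 2).mul hsub).div_const _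
  have h2 : HasDerivAt (fun s => Real.log ((w t (Function.update y t s)) ^ 2))
      (((2 : ℕ) * (w t (Function.update y t (y t))) ^ 1 * d)
        / (w t (Function.update y t (y t))) ^ 2) (y t) :=
    (hg.pow 2).log (pow_ne_zero _ hwne)
  rw [h1.deriv, h2.deriv, hgy]
  have hσne : (σ t) ≠ 0 := (hσ t).ne'
  have hwyne : w t y ≠ 0 := (hw t y).ne'
  field_simp
  ring
end

section
/- Let n ≥ 2, let K be a real symmetric n×n matrix and Δ a real diagonal n×n matrix such that G := K + Δ is invertible and the leading (n−1)×(n−1) block A of G is invertible. Let k ∈ ℝⁿ⁻¹ be the last column of K without its last entry. Then [G⁻¹]_{nn} ≠ 0 and K_{nn} − kᵀ A⁻¹ k = 1/[G⁻¹]_{nn} − Δ_{nn}. (This identity gives the closed-form leave-one-out cross-validation predictive variance of the MO-RCGP: the LOO variance for an observation equals the reciprocal of the corresponding diagonal entry of (K + ΣJ_W)⁻¹ minus the diagonal perturbation of that observation.) -/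
open Matrix

/-- Closed-form leave-one-out cross-validation predictive variance of the MO-RCGP:
for a symmetric kernel matrix `K` and diagonal perturbation `Δ` with `G = K + Δ`
invertible and leading block `A` of `G` invertible, the LOO variance
`K_{nn} − kᵀ A⁻¹ k` equals `1/[G⁻¹]_{nn} − Δ_{nn}`, where `k` is the last column
of `K` without its last entry. -/
theorem loo_cv_predictive_variance
    (m : ℕ) (hm : 1 ≤ m)
    (K Δ : Matrix (Fin m ⊕ Fin 1) (Fin m ⊕ Fin 1) ℝ)
    (hKsymm : K.IsSymm) (hΔ : Δ.IsDiag)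
    (hGinv : IsUnit (K + Δ).det)
    (hAinv : IsUnit (Matrix.of fun i j : Fin m => (K + Δ) (Sum.inl i) (Sum.inl j)).det) :
    (K + Δ)⁻¹ (Sum.inr 0) (Sum.inr 0) ≠ 0 ∧
    K (Sum.inr 0) (Sum.inr 0)
        - (fun i => K (Sum.inl i) (Sum.inr 0)) ⬝ᵥ
            ((Matrix.of fun i j : Fin m => (K + Δ) (Sum.inl i) (Sum.inl j))⁻¹ *ᵥ
              fun i => K (Sum.inl i) (Sum.inr 0))
      = 1 / (K + Δ)⁻¹ (Sum.inr 0) (Sum.inr 0) - Δ (Sum.inr 0) (Sum.inr 0) := by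
  set G := K + Δ with hG
  set A : Matrix (Fin m) (Fin m) ℝ := G.toBlocks₁₁ with hA
  set B : Matrix (Fin m) (Fin 1) ℝ := G.toBlocks₁₂ with hB
  set C : Matrix (Fin 1) (Fin m) ℝ := G.toBlocks₂₁ with hC
  set D : Matrix (Fin 1) (Fin 1) ℝ := G.toBlocks₂₂ with hD
  have hblocks : fromBlocks A B C D = G := fromBlocks_toBlocks G
  haveI iA : Invertible A := A.invertibleOfIsUnitDet hAinv
  haveI iG : Invertible (fromBlocks A B C D) :=
    ((fromBlocks A B C D).invertibleOfIsUnitDet (hblocks ▸ hGinv))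
  haveI iS : Invertible (D - C * ⅟A * B) := invertibleOfFromBlocks₁₁Invertible A B C D
  set S : Matrix (Fin 1) (Fin 1) ℝ := D - C * ⅟A * B with hS
  -- the (inr 0, inr 0) entry of G⁻¹ equals ⅟S 0 0
  have hGinv_entry : G⁻¹ (Sum.inr 0) (Sum.inr 0) = (⅟S) 0 0 := by
    rw [← hblocks, ← invOf_eq_nonsing_inv, invOf_fromBlocks₁₁_eq]
    rfl
  have hSS : (⅟S) 0 0 * S 0 0 = 1 := by
    have := congrFun (congrFun (invOf_mul_self S) (0 : Fin 1)) (0 : Fin 1)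
    simpa [Matrix.mul_apply] using this
  have hne : (⅟S) 0 0 ≠ 0 := by
    intro h; rw [h, zero_mul] at hSS; exact zero_ne_one hSS
  have hinv : 1 / (⅟S) 0 0 = S 0 0 := by
    rw [eq_comm, eq_div_iff hne, mul_comm]
    exact hSS
  -- identify S 0 0
  have hC0 : ∀ i, C 0 i = K (Sum.inl i) (Sum.inr 0) := by
    intro i
    have hd : Δ (Sum.inr (0 : Fin 1)) (Sum.inl i) = 0 := hΔ (by simp)
    have hk : K (Sum.inr (0 : Fin 1)) (Sum.inl i) = K (Sum.inl i) (Sum.inr 0) := by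
      conv_lhs => rw [← hKsymm]
      rfl
    simp [hC, toBlocks₂₁, hG, Matrix.add_apply, hd, hk]
  have hB0 : ∀ i, B i 0 = K (Sum.inl i) (Sum.inr 0) := by
    intro i
    have hd : Δ (Sum.inl i) (Sum.inr (0 : Fin 1)) = 0 := hΔ (by simp)
    simp [hB, toBlocks₁₂, hG, Matrix.add_apply, hd]
  have hS00 : S 0 0 = K (Sum.inr 0) (Sum.inr 0) + Δ (Sum.inr 0) (Sum.inr 0)
      - (fun i => K (Sum.inl i) (Sum.inr 0)) ⬝ᵥ (A⁻¹ *ᵥ fun i => K (Sum.inl i) (Sum.inr 0)) := by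
    have h1 : D 0 0 = K (Sum.inr 0) (Sum.inr 0) + Δ (Sum.inr 0) (Sum.inr 0) := rfl
    have h2 : (C * ⅟A * B) 0 0
        = (fun i => K (Sum.inl i) (Sum.inr 0)) ⬝ᵥ (A⁻¹ *ᵥ fun i => K (Sum.inl i) (Sum.inr 0)) := by
      simp only [Matrix.mul_apply, dotProduct, mulVec, Finset.sum_mul, Finset.mul_sum,
        invOf_eq_nonsing_inv, hC0, hB0]
      rw [Finset.sum_comm]
      exact Finset.sum_congr rfl fun i _ => Finset.sum_congr rfl fun j _ => by ring
    rw [hS, Matrix.sub_apply, h1, h2]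
  have hAeq : (Matrix.of fun i j : Fin m => G (Sum.inl i) (Sum.inl j)) = A := rfl
  rw [hAeq, hGinv_entry]
  refine ⟨hne, ?_⟩
  rw [hinv, hS00]
  ring
end

section
/- Let n be a positive natural number, let Σ be a real symmetric positive definite n×n matrix, and let μ₁, μ₂ ∈ ℝⁿ. Then the Kullback–Leibler divergence between the multivariate Gaussian measures N(μ₁, Σ) and N(μ₂, Σ) on ℝⁿ equals ENNReal.ofReal( (1/2)·(μ₁ − μ₂)ᵀ Σ⁻¹ (μ₁ − μ₂) ). (For Gaussians with equal covariance matrices, the trace term and the log-determinant term of the Gaussian KL divergence vanish, leaving only the Mahalanobis term.) -/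
open Matrix MeasureTheory

open Classical in
/-- The Kullback–Leibler divergence `∫ log(dμ/dν) dμ` when `μ ≪ ν` with integrable
log-density, and `∞` otherwise. -/
noncomputable def klDiv {α : Type*} [MeasurableSpace α] (μ ν : Measure α) : ENNReal :=
  if μ ≪ ν ∧ Integrable (MeasureTheory.llr μ ν) μ then
    ENNReal.ofReal (∫ x, MeasureTheory.llr μ ν x ∂μ)
  else ⊤

/-- The multivariate Gaussian measure `N(μ, Σ)` on `ℝⁿ`, given by its density with
respect to Lebesgue measure. -/
noncomputable def multivariateGaussian {n : ℕ} (μv : Fin n → ℝ)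
    (S : Matrix (Fin n) (Fin n) ℝ) : Measure (Fin n → ℝ) :=
  volume.withDensity fun x =>
    ENNReal.ofReal ((Real.sqrt ((2 * Real.pi) ^ n * S.det))⁻¹ *
      Real.exp (-(1 / 2 : ℝ) * ((x - μv) ⬝ᵥ (S⁻¹ *ᵥ (x - μv)))))

/-! With equal covariances the log-density ratio of `N(μ₁, Σ)` to `N(μ₂, Σ)` is the affine
function `x ↦ (Σ⁻¹ (μ₁ - μ₂)) ⬝ (x - μ₁) + ½ (μ₁ - μ₂)ᵀ Σ⁻¹ (μ₁ - μ₂)`, so the KL divergence is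
its mean under `N(μ₁, Σ)`. The linear part has mean zero: the substitution `x = Σ^{1/2} y + μ₁`
turns it into an odd function integrated against the standard Gaussian density. -/

open Real
open scoped MatrixOrder

section StandardGaussian

variable {ι : Type*} [Fintype ι]

lemma exp_neg_half_dotProduct_self (y : ι → ℝ) :
    rexp (-(1 / 2) * (y ⬝ᵥ y)) = ∏ i, rexp (-(1 / 2) * y i ^ 2) := by
  simp only [← Real.exp_sum, dotProduct, Finset.mul_sum, sq]

lemma integrable_exp_neg_half_dotProduct_self :
    Integrable fun y : ι → ℝ => rexp (-(1 / 2) * (y ⬝ᵥ y)) := by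
  simp only [exp_neg_half_dotProduct_self]
  exact Integrable.fintype_prod fun _ => integrable_exp_neg_mul_sq (by norm_num)

lemma integral_exp_neg_half_dotProduct_self :
    ∫ y : ι → ℝ, rexp (-(1 / 2) * (y ⬝ᵥ y)) = √(2 * π) ^ Fintype.card ι := by
  simp only [exp_neg_half_dotProduct_self]
  rw [volume_pi, integral_fintype_prod_eq_pow fun t : ℝ => rexp (-(1 / 2) * t ^ 2),
    integral_gaussian]
  norm_num [div_div_eq_mul_div, mul_comm]

lemma integrable_apply_mul_exp_neg_half_dotProduct_self (i : ι) :
    Integrable fun y : ι → ℝ => y i * rexp (-(1 / 2) * (y ⬝ᵥ y)) := by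
  classical
  have hfactor : ∀ j, Integrable fun t : ℝ =>
      (if j = i then t else 1) * rexp (-(1 / 2) * t ^ 2) := by
    intro j
    split_ifs
    · exact integrable_mul_exp_neg_mul_sq (by norm_num)
    · simpa using integrable_exp_neg_mul_sq (by norm_num : (0 : ℝ) < 1 / 2)
  refine (Integrable.fintype_prod hfactor).congr (.of_forall fun y => ?_)
  simp only [Finset.prod_mul_distrib, Finset.prod_ite_eq', Finset.mem_univ, if_true,
    ← exp_neg_half_dotProduct_self]

lemma integrable_dotProduct_mul_exp_neg_half_dotProduct_self (v : ι → ℝ) :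
    Integrable fun y : ι → ℝ => (v ⬝ᵥ y) * rexp (-(1 / 2) * (y ⬝ᵥ y)) := by
  simp only [dotProduct, Finset.sum_mul, mul_assoc]
  exact integrable_finsetSum _ fun i _ =>
    (integrable_apply_mul_exp_neg_half_dotProduct_self i).const_mul (v i)

lemma integral_dotProduct_mul_exp_neg_half_dotProduct_self (v : ι → ℝ) :
    ∫ y : ι → ℝ, (v ⬝ᵥ y) * rexp (-(1 / 2) * (y ⬝ᵥ y)) = 0 := by
  have hodd :=
    integral_neg_eq_self (fun y : ι → ℝ => (v ⬝ᵥ y) * rexp (-(1 / 2) * (y ⬝ᵥ y))) volume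
  simp only [dotProduct_neg, neg_dotProduct, neg_neg, neg_mul, integral_neg] at hodd ⊢
  linarith

end StandardGaussian

section AffineChangeOfVariables

variable {ι : Type*} [Fintype ι] [DecidableEq ι] {B : Matrix ι ι ℝ} (hB : B.det ≠ 0) (a : ι → ℝ)
  {E : Type*} [NormedAddCommGroup E]
include hB

lemma measurableEmbedding_mulVec_add : MeasurableEmbedding fun y : ι → ℝ => B *ᵥ y + a :=
  Continuous.measurableEmbedding (by fun_prop) <| (add_left_injective a).comp <|
    mulVec_injective_iff_isUnit.2 ((B.isUnit_iff_isUnit_det).2 hB.isUnit)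

lemma map_mulVec_add_volume :
    (volume : Measure (ι → ℝ)).map (fun y => B *ᵥ y + a) = ENNReal.ofReal |B.det|⁻¹ • volume := by
  have hcomp : (fun y : ι → ℝ => B *ᵥ y + a) = (· + a) ∘ toLin' B := by
    ext; simp
  rw [hcomp, ← Measure.map_map (by fun_prop) (by fun_prop),
    Real.map_matrix_volume_pi_eq_smul_volume_pi hB, Measure.map_smul, map_add_right_eq_self,
    abs_inv]

lemma integral_comp_mulVec_add [NormedSpace ℝ E] (f : (ι → ℝ) → E) :
    ∫ y, f (B *ᵥ y + a) = |B.det|⁻¹ • ∫ x, f x := by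
  rw [← (measurableEmbedding_mulVec_add hB a).integral_map, map_mulVec_add_volume hB,
    integral_smul_measure, ENNReal.toReal_ofReal (by positivity)]

lemma integrable_comp_mulVec_add_iff {f : (ι → ℝ) → E} :
    Integrable (fun y => f (B *ᵥ y + a)) ↔ Integrable f := by
  rw [← Function.comp_def, ← (measurableEmbedding_mulVec_add hB a).integrable_map_iff,
    map_mulVec_add_volume hB, integrable_smul_measure (by simpa using hB) ENNReal.ofReal_ne_top]

end AffineChangeOfVariables

section PosDefSqrt

variable {ι : Type*} [Fintype ι] [DecidableEq ι] {S : Matrix ι ι ℝ}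

lemma Matrix.PosDef.det_sqrt_sq (hS : S.PosDef) : (CFC.sqrt S).det ^ 2 = S.det := by
  rw [sq, ← det_mul, CFC.sqrt_mul_sqrt_self S hS.posSemidef.nonneg]

lemma Matrix.PosDef.abs_det_sqrt (hS : S.PosDef) : |(CFC.sqrt S).det| = √S.det := by
  rw [← hS.det_sqrt_sq, Real.sqrt_sq_eq_abs]

lemma Matrix.PosDef.det_sqrt_ne_zero (hS : S.PosDef) : (CFC.sqrt S).det ≠ 0 :=
  abs_pos.1 (hS.abs_det_sqrt ▸ Real.sqrt_pos.2 hS.det_pos)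

lemma Matrix.PosDef.sqrt_mulVec_dotProduct_inv_mulVec_sqrt_mulVec (hS : S.PosDef) (y : ι → ℝ) :
    (CFC.sqrt S *ᵥ y) ⬝ᵥ (S⁻¹ *ᵥ (CFC.sqrt S *ᵥ y)) = y ⬝ᵥ y := by
  set R := CFC.sqrt S
  have hRt : Rᵀ = R := (CFC.sqrt_nonneg S).posSemidef.1
  have hR : IsUnit R.det := hS.det_sqrt_ne_zero.isUnit
  have hRSR : R * S⁻¹ * R = 1 := by
    rw [← CFC.sqrt_mul_sqrt_self S hS.posSemidef.nonneg, mul_inv_rev, ← Matrix.mul_assoc,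
      Matrix.mul_nonsing_inv _ hR, Matrix.one_mul, Matrix.nonsing_inv_mul _ hR]
  have hRsymm : ∀ v, (R *ᵥ y) ⬝ᵥ v = y ⬝ᵥ (R *ᵥ v) := fun v => by
    rw [dotProduct_mulVec, ← mulVec_transpose, hRt]
  rw [hRsymm, mulVec_mulVec, mulVec_mulVec, hRSR, one_mulVec]

end PosDefSqrt

section MultivariateGaussian

variable {n : ℕ} {S : Matrix (Fin n) (Fin n) ℝ}

noncomputable def multivariateGaussianPDF (μ : Fin n → ℝ) (S : Matrix (Fin n) (Fin n) ℝ)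
    (x : Fin n → ℝ) : ℝ :=
  (√((2 * π) ^ n * S.det))⁻¹ * rexp (-(1 / 2) * ((x - μ) ⬝ᵥ (S⁻¹ *ᵥ (x - μ))))

lemma multivariateGaussian_eq_withDensity (μ : Fin n → ℝ) :
    multivariateGaussian μ S =
      volume.withDensity fun x => ENNReal.ofReal (multivariateGaussianPDF μ S x) :=
  rfl

lemma continuous_multivariateGaussianPDF (μ : Fin n → ℝ) :
    Continuous (multivariateGaussianPDF μ S) := by
  unfold multivariateGaussianPDF
  fun_prop

lemma multivariateGaussianPDF_nonneg (μ x : Fin n → ℝ) : 0 ≤ multivariateGaussianPDF μ S x := by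
  unfold multivariateGaussianPDF
  positivity

variable (hS : S.PosDef) (μ : Fin n → ℝ)
include hS

lemma abs_det_sqrt_mul_multivariateGaussianPDF_sqrt_mulVec_add (y : Fin n → ℝ) :
    |(CFC.sqrt S).det| * multivariateGaussianPDF μ S (CFC.sqrt S *ᵥ y + μ) =
      (√(2 * π) ^ n)⁻¹ * rexp (-(1 / 2) * (y ⬝ᵥ y)) := by
  have hnorm : √((2 * π) ^ n * S.det) = √(2 * π) ^ n * √S.det := by
    rw [Real.sqrt_eq_iff_eq_sq (by positivity [hS.det_pos]) (by positivity)]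
    conv_rhs => rw [mul_pow, ← pow_mul, mul_comm n, pow_mul, sq_sqrt (by positivity),
      sq_sqrt hS.det_pos.le]
  have hdet : 0 < √S.det := Real.sqrt_pos.2 hS.det_pos
  rw [multivariateGaussianPDF, add_sub_cancel_right,
    hS.sqrt_mulVec_dotProduct_inv_mulVec_sqrt_mulVec, hS.abs_det_sqrt, hnorm]
  field_simp

lemma integral_multivariateGaussian (f : (Fin n → ℝ) → ℝ) :
    ∫ x, f x ∂multivariateGaussian μ S =
      (√(2 * π) ^ n)⁻¹ * ∫ y, rexp (-(1 / 2) * (y ⬝ᵥ y)) * f (CFC.sqrt S *ᵥ y + μ) := by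
  have hB := hS.det_sqrt_ne_zero
  calc ∫ x, f x ∂multivariateGaussian μ S
      = ∫ x, multivariateGaussianPDF μ S x * f x := by
        rw [multivariateGaussian_eq_withDensity, integral_withDensity_eq_integral_toReal_smul
          (continuous_multivariateGaussianPDF μ).measurable.ennreal_ofReal
          (.of_forall fun _ => ENNReal.ofReal_lt_top)]
        simp only [ENNReal.toReal_ofReal (multivariateGaussianPDF_nonneg μ _), smul_eq_mul]
    _ = |(CFC.sqrt S).det| * ∫ y, multivariateGaussianPDF μ S (CFC.sqrt S *ᵥ y + μ) *
          f (CFC.sqrt S *ᵥ y + μ) := by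
        rw [integral_comp_mulVec_add hB μ fun x => multivariateGaussianPDF μ S x * f x,
          smul_eq_mul, mul_inv_cancel_left₀ (abs_ne_zero.2 hB)]
    _ = (√(2 * π) ^ n)⁻¹ * ∫ y, rexp (-(1 / 2) * (y ⬝ᵥ y)) * f (CFC.sqrt S *ᵥ y + μ) := by
        rw [← integral_const_mul, ← integral_const_mul]
        simp only [← mul_assoc, abs_det_sqrt_mul_multivariateGaussianPDF_sqrt_mulVec_add hS]

lemma integrable_multivariateGaussian_iff {f : (Fin n → ℝ) → ℝ} :
    Integrable f (multivariateGaussian μ S) ↔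
      Integrable fun y => rexp (-(1 / 2) * (y ⬝ᵥ y)) * f (CFC.sqrt S *ᵥ y + μ) := by
  have hB := hS.det_sqrt_ne_zero
  rw [multivariateGaussian_eq_withDensity, integrable_withDensity_iff_integrable_smul'
      (continuous_multivariateGaussianPDF μ).measurable.ennreal_ofReal
      (.of_forall fun _ => ENNReal.ofReal_lt_top),
    ← integrable_comp_mulVec_add_iff hB μ,
    ← integrable_const_mul_iff (isUnit_iff_ne_zero.2 (abs_ne_zero.2 hB))]
  have hdensity : ∀ y, |(CFC.sqrt S).det| * ((ENNReal.ofReal (multivariateGaussianPDF μ S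
      (CFC.sqrt S *ᵥ y + μ))).toReal • f (CFC.sqrt S *ᵥ y + μ)) =
        (√(2 * π) ^ n)⁻¹ * (rexp (-(1 / 2) * (y ⬝ᵥ y)) * f (CFC.sqrt S *ᵥ y + μ)) := fun y => by
    rw [ENNReal.toReal_ofReal (multivariateGaussianPDF_nonneg μ _), smul_eq_mul, ← mul_assoc,
      abs_det_sqrt_mul_multivariateGaussianPDF_sqrt_mulVec_add hS, mul_assoc]
  simp only [hdensity]
  exact integrable_const_mul_iff (isUnit_iff_ne_zero.2 (by positivity)) _

end MultivariateGaussian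

section GaussianMoments

variable {n : ℕ} {S : Matrix (Fin n) (Fin n) ℝ} (hS : S.PosDef) (μ : Fin n → ℝ)
include hS

lemma isProbabilityMeasure_multivariateGaussian :
    IsProbabilityMeasure (multivariateGaussian μ S) := by
  have hint : Integrable (fun _ => (1 : ℝ)) (multivariateGaussian μ S) := by
    rw [integrable_multivariateGaussian_iff hS]
    simpa using integrable_exp_neg_half_dotProduct_self
  have : IsFiniteMeasure (multivariateGaussian μ S) :=
    (integrable_const_iff.1 hint).resolve_left one_ne_zero
  have hmass := integral_multivariateGaussian hS μ fun _ => (1 : ℝ)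
  simp only [integral_const, smul_eq_mul, mul_one, integral_exp_neg_half_dotProduct_self,
    Fintype.card_fin] at hmass
  rw [inv_mul_cancel₀ (by positivity)] at hmass
  exact ⟨(ENNReal.toReal_eq_one_iff _).1 hmass⟩

lemma integrable_dotProduct_sub_multivariateGaussian (w : Fin n → ℝ) :
    Integrable (fun x => w ⬝ᵥ (x - μ)) (multivariateGaussian μ S) := by
  rw [integrable_multivariateGaussian_iff hS]
  simp only [add_sub_cancel_right, dotProduct_mulVec, mul_comm (rexp _)]
  exact integrable_dotProduct_mul_exp_neg_half_dotProduct_self _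

lemma integral_dotProduct_sub_multivariateGaussian (w : Fin n → ℝ) :
    ∫ x, w ⬝ᵥ (x - μ) ∂multivariateGaussian μ S = 0 := by
  rw [integral_multivariateGaussian hS]
  simp only [add_sub_cancel_right, dotProduct_mulVec, mul_comm (rexp _)]
  rw [integral_dotProduct_mul_exp_neg_half_dotProduct_self, mul_zero]

end GaussianMoments

section KLDivWithDensity

variable {α : Type*} [MeasurableSpace α] {μ ν : Measure α} [SigmaFinite ν] {f : α → ℝ}

lemma llr_withDensity_ofReal_exp (hf : Measurable f) :
    llr (ν.withDensity fun x => ENNReal.ofReal (rexp (f x))) ν =ᵐ[ν] f := by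
  filter_upwards [Measure.rnDeriv_withDensity ν hf.exp.ennreal_ofReal] with x hx
  rw [llr_def]
  simp only [hx, ENNReal.toReal_ofReal (exp_nonneg _), log_exp]

lemma klDiv_eq_ofReal_integral_of_eq_withDensity_exp
    (hμ : μ = ν.withDensity fun x => ENNReal.ofReal (rexp (f x))) (hf : Measurable f)
    (hfi : Integrable f μ) :
    klDiv μ ν = ENNReal.ofReal (∫ x, f x ∂μ) := by
  have hac : μ ≪ ν := hμ ▸ withDensity_absolutelyContinuous ν _
  have hllr : llr μ ν =ᵐ[μ] f := hac.ae_le (hμ ▸ llr_withDensity_ofReal_exp hf)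
  rw [klDiv, if_pos ⟨hac, hfi.congr hllr.symm⟩, integral_congr_ae hllr]

end KLDivWithDensity

lemma Matrix.IsSymm.add_dotProduct_mulVec_add {ι R : Type*} [Fintype ι] [CommRing R]
    {A : Matrix ι ι R} (hA : A.IsSymm) (u v : ι → R) :
    (u + v) ⬝ᵥ (A *ᵥ (u + v)) = u ⬝ᵥ (A *ᵥ u) + 2 * ((A *ᵥ v) ⬝ᵥ u) + v ⬝ᵥ (A *ᵥ v) := by
  have hsymm : v ⬝ᵥ (A *ᵥ u) = (A *ᵥ v) ⬝ᵥ u := by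
    rw [dotProduct_mulVec, ← mulVec_transpose, hA.eq]
  rw [mulVec_add, dotProduct_add, add_dotProduct, add_dotProduct, hsymm,
    dotProduct_comm u (A *ᵥ v)]
  ring

lemma multivariateGaussian_eq_withDensity_exp {n : ℕ} {S : Matrix (Fin n) (Fin n) ℝ}
    (hS : S.IsHermitian) (μ₁ μ₂ : Fin n → ℝ) :
    multivariateGaussian μ₁ S = (multivariateGaussian μ₂ S).withDensity fun x =>
      ENNReal.ofReal (rexp ((S⁻¹ *ᵥ (μ₁ - μ₂)) ⬝ᵥ (x - μ₁) +
        1 / 2 * ((μ₁ - μ₂) ⬝ᵥ (S⁻¹ *ᵥ (μ₁ - μ₂))))) := by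
  rw [multivariateGaussian_eq_withDensity, multivariateGaussian_eq_withDensity,
    ← withDensity_mul _ (continuous_multivariateGaussianPDF μ₂).measurable.ennreal_ofReal
      (by fun_prop)]
  have hSinv : S⁻¹.IsSymm := hS.inv.eq
  congr 1 with x
  rw [Pi.mul_apply, ← ENNReal.ofReal_mul (multivariateGaussianPDF_nonneg μ₂ x),
    multivariateGaussianPDF, multivariateGaussianPDF, mul_assoc, ← exp_add,
    ← sub_add_sub_cancel x μ₁ μ₂, hSinv.add_dotProduct_mulVec_add]
  congr 3
  ring

theorem klDiv_gaussian_same_cov_general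
    (n : ℕ) (S : Matrix (Fin n) (Fin n) ℝ) (hS : S.PosDef)
    (μ₁ μ₂ : Fin n → ℝ) :
    klDiv (multivariateGaussian μ₁ S) (multivariateGaussian μ₂ S)
      = ENNReal.ofReal ((1 / 2 : ℝ) * ((μ₁ - μ₂) ⬝ᵥ (S⁻¹ *ᵥ (μ₁ - μ₂)))) := by
  have := isProbabilityMeasure_multivariateGaussian hS μ₁
  have := isProbabilityMeasure_multivariateGaussian hS μ₂
  have hcentered :=
    integrable_dotProduct_sub_multivariateGaussian hS μ₁ (S⁻¹ *ᵥ (μ₁ - μ₂))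
  rw [klDiv_eq_ofReal_integral_of_eq_withDensity_exp
      (multivariateGaussian_eq_withDensity_exp hS.1 μ₁ μ₂) (by fun_prop)
      (hcentered.add (integrable_const _)),
    integral_add hcentered (integrable_const _), integral_dotProduct_sub_multivariateGaussian hS,
    integral_const, probReal_univ, one_smul, zero_add]

/-- For Gaussians with equal covariance matrices the KL divergence reduces to the
Mahalanobis term: `KL(N(μ₁,Σ) ‖ N(μ₂,Σ)) = (1/2)(μ₁−μ₂)ᵀΣ⁻¹(μ₁−μ₂)`. -/
theorem klDiv_gaussian_same_cov
    (n : ℕ) (hn : 0 < n) (S : Matrix (Fin n) (Fin n) ℝ) (hS : S.PosDef)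
    (μ₁ μ₂ : Fin n → ℝ) :
    klDiv (multivariateGaussian μ₁ S) (multivariateGaussian μ₂ S)
      = ENNReal.ofReal ((1 / 2 : ℝ) * ((μ₁ - μ₂) ⬝ᵥ (S⁻¹ *ᵥ (μ₁ - μ₂)))) :=
  klDiv_gaussian_same_cov_general n S hS μ₁ μ₂
end
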